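/- Let n ≥ 2 and let c, c̄ : I → EuclideanSpace ℝ (Fin n) be smooth strongly regular curves on a nontrivial interval I containing 0. For each curve let e₁(t),…,e_n(t) (resp. ē₁(t),…,ē_n(t)) be the Gram–Schmidt orthonormalization of the first n iterated derivatives, and let κ_i(t) = ⟨e_i'(t), e_{i+1}(t)⟩/‖c'(t)‖ (resp. κ̄_i) for 1 ≤ i ≤ n−1. Suppose c(0) = c̄(0), e_i(0) = ē_i(0) for all 1 ≤ i ≤ n, ‖c'(t)‖ = ‖c̄'(t)‖ for all t ∈ I, and κ_i(t) = κ̄_i(t) for all t ∈ I and 1 ≤ i ≤ n−1. Then c(t) = c̄(t) for all t ∈ I. -/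

import Mathlib

open scoped RealInnerProductSpace

/-- The family of iterated derivatives `c'(t), c''(t), …` of a curve `c`;
`curveDerivs c t i = c^{(i+1)}(t)`. -/
noncomputable def curveDerivs {n : ℕ} (c : ℝ → EuclideanSpace ℝ (Fin n)) (t : ℝ) :
    ℕ → EuclideanSpace ℝ (Fin n) :=
  fun i => iteratedDeriv (i + 1) c t

/-- The Frenet–Serret frame of a (strongly regular) curve `c`: the Gram–Schmidt
orthonormalization of its iterated derivatives.  Here `frenetFrame c r t` is the
`(r+1)`-st frame vector `e_{r+1}(t)` (so `frenetFrame c 0 = e₁`). -/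
noncomputable def frenetFrame {n : ℕ} (c : ℝ → EuclideanSpace ℝ (Fin n)) (r : ℕ) (t : ℝ) :
    EuclideanSpace ℝ (Fin n) :=
  InnerProductSpace.gramSchmidtNormed ℝ (curveDerivs c t) r

/-- The `(i+1)`-st Frenet–Serret curvature `κ_{i+1}(t) = ⟪e_{i+1}'(t), e_{i+2}(t)⟫ / ‖c'(t)‖`
(so `curvature c 0 = κ₁`). -/
noncomputable def curvature {n : ℕ} (c : ℝ → EuclideanSpace ℝ (Fin n)) (i : ℕ) (t : ℝ) : ℝ :=
  ⟪deriv (frenetFrame c i) t, frenetFrame c (i + 1) t⟫ / ‖deriv c t‖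

open InnerProductSpace

variable {n : ℕ} {c : ℝ → EuclideanSpace ℝ (Fin n)}

lemma contDiff_itd (hc : ContDiff ℝ (⊤:ℕ∞) c) (k : ℕ) : ContDiff ℝ (⊤:ℕ∞) (iteratedDeriv k c) := by
  induction k with
  | zero => rw [iteratedDeriv_zero]; exact hc
  | succ k ih => rw [iteratedDeriv_succ]; exact (contDiff_infty_iff_deriv.1 ih).2

lemma hasDerivAt_itd (hc : ContDiff ℝ (⊤:ℕ∞) c) (k : ℕ) (t : ℝ) :
    HasDerivAt (iteratedDeriv k c) (iteratedDeriv (k + 1) c t) t := by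
  rw [iteratedDeriv_succ]
  exact ((contDiff_itd hc k).differentiable (by simp)).differentiableAt.hasDerivAt

lemma inner_zero_of_mem_span {S : Set (EuclideanSpace ℝ (Fin n))}
    {x y : EuclideanSpace ℝ (Fin n)} (hx : x ∈ Submodule.span ℝ S)
    (h : ∀ v ∈ S, ⟪v, y⟫ = 0) : ⟪x, y⟫ = 0 := by
  induction hx using Submodule.span_induction with
  | mem v hv => exact h v hv
  | zero => simp
  | add a b _ _ ha hb => rw [inner_add_left, ha, hb, add_zero]
  | smul r a _ ha => rw [real_inner_smul_left, ha, mul_zero]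

lemma gram_ne_zero {t : ℝ}
    (hli : LinearIndependent ℝ (fun i : Fin n => iteratedDeriv ((i : ℕ) + 1) c t))
    {r : ℕ} (hr : r < n) : gramSchmidt ℝ (curveDerivs c t) r ≠ 0 := by
  apply gramSchmidt_ne_zero_coe
  have he : (curveDerivs c t ∘ ((↑) : Set.Iic r → ℕ)) =
      (fun i : Fin n => iteratedDeriv ((i : ℕ) + 1) c t) ∘
        (fun i : Set.Iic r => (⟨(i : ℕ), lt_of_le_of_lt i.2 hr⟩ : Fin n)) := rfl
  rw [he]
  exact hli.comp _ (fun a b hab => by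
    apply Subtype.ext
    simpa [Fin.mk.injEq] using hab)

lemma frame_eq {r : ℕ} {t : ℝ} : frenetFrame c r t =
    (‖gramSchmidt ℝ (curveDerivs c t) r‖)⁻¹ • gramSchmidt ℝ (curveDerivs c t) r := rfl

lemma frame_ne_zero {t : ℝ}
    (hli : LinearIndependent ℝ (fun i : Fin n => iteratedDeriv ((i : ℕ) + 1) c t))
    {r : ℕ} (hr : r < n) : frenetFrame c r t ≠ 0 := by
  rw [frame_eq]
  exact smul_ne_zero (by simpa using gram_ne_zero hli hr) (gram_ne_zero hli hr)

lemma gram_hasDerivAt (hc : ContDiff ℝ (⊤:ℕ∞) c) {U : Set ℝ}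
    (hU : ∀ t ∈ U, LinearIndependent ℝ (fun i : Fin n => iteratedDeriv ((i : ℕ) + 1) c t)) :
    ∀ r < n, ∀ t ∈ U,
      ∃ d, HasDerivAt (fun s => gramSchmidt ℝ (curveDerivs c s) r) d t ∧
        d ∈ Submodule.span ℝ (curveDerivs c t '' Set.Iic (r + 1)) := by
  intro r
  induction r using Nat.strong_induction_on with
  | _ r IH =>
  intro hr t ht
  have hV : ∀ (k : ℕ) (s : ℝ), HasDerivAt (fun s' => curveDerivs c s' k)
      (curveDerivs c s (k + 1)) s := fun k s => hasDerivAt_itd hc (k + 1) s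
  have key : ∀ i, i < r → ∃ d', HasDerivAt
      (fun s => (⟪gramSchmidt ℝ (curveDerivs c s) i, curveDerivs c s r⟫ /
          ⟪gramSchmidt ℝ (curveDerivs c s) i, gramSchmidt ℝ (curveDerivs c s) i⟫) •
          gramSchmidt ℝ (curveDerivs c s) i) d' t ∧
      d' ∈ Submodule.span ℝ (curveDerivs c t '' Set.Iic (r + 1)) := by
    intro i hi
    obtain ⟨d, hd, hdm⟩ := IH i hi (hi.trans hr) t ht
    have hgi : gramSchmidt ℝ (curveDerivs c t) i ≠ 0 := gram_ne_zero (hU t ht) (hi.trans hr)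
    have h1 := HasDerivAt.inner ℝ hd (hV r t)
    have h2 := HasDerivAt.inner ℝ hd hd
    have h3 := h1.div h2 (fun h => hgi (inner_self_eq_zero.1 h))
    have h4 := h3.smul hd
    refine ⟨_, h4, ?_⟩
    apply Submodule.add_mem
    · exact Submodule.smul_mem _ _ (Submodule.span_mono
        (Set.image_mono (Set.Iic_subset_Iic.2 (by omega))) hdm)
    · exact Submodule.smul_mem _ _ (Submodule.span_mono
        (Set.image_mono (Set.Iic_subset_Iic.2 (by omega)))
        (gramSchmidt_mem_span ℝ (curveDerivs c t) (le_refl i)))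
  choose D hD hDm using key
  set A' : ℕ → EuclideanSpace ℝ (Fin n) := fun i => if h : i < r then D i h else 0 with hA'
  have hsum : HasDerivAt (fun s => ∑ i ∈ Finset.Iio r,
      (⟪gramSchmidt ℝ (curveDerivs c s) i, curveDerivs c s r⟫ /
          ⟪gramSchmidt ℝ (curveDerivs c s) i, gramSchmidt ℝ (curveDerivs c s) i⟫) •
          gramSchmidt ℝ (curveDerivs c s) i) (∑ i ∈ Finset.Iio r, A' i) t := by
    apply HasDerivAt.fun_sum
    intro i hi
    have hi' : i < r := Finset.mem_Iio.1 hi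
    simpa [hA', dif_pos hi'] using hD i hi'
  refine ⟨curveDerivs c t (r + 1) - ∑ i ∈ Finset.Iio r, A' i, ?_, ?_⟩
  · apply ((hV r t).sub hsum).congr_of_eventuallyEq
    apply Filter.Eventually.of_forall
    intro s
    beta_reduce
    rw [gramSchmidt_def ℝ (curveDerivs c s) r]
    congr 1
    refine Finset.sum_congr rfl (fun i hi => ?_)
    rw [Submodule.starProjection_singleton, real_inner_self_eq_norm_sq]
    norm_cast
  · apply Submodule.sub_mem
    · exact Submodule.subset_span ⟨r + 1, Set.mem_Iic.2 le_rfl, rfl⟩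
    · apply Submodule.sum_mem
      intro i hi
      have hi' : i < r := Finset.mem_Iio.1 hi
      simpa [hA', dif_pos hi'] using hDm i hi'

lemma frenet_hasDerivAt (hc : ContDiff ℝ (⊤:ℕ∞) c) {U : Set ℝ}
    (hU : ∀ t ∈ U, LinearIndependent ℝ (fun i : Fin n => iteratedDeriv ((i : ℕ) + 1) c t))
    {r : ℕ} (hr : r < n) {t : ℝ} (ht : t ∈ U) :
    ∃ d, HasDerivAt (frenetFrame c r) d t ∧
      d ∈ Submodule.span ℝ (curveDerivs c t '' Set.Iic (r + 1)) := by
  obtain ⟨d, hd, hdm⟩ := gram_hasDerivAt hc hU r hr t ht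
  have hgr : gramSchmidt ℝ (curveDerivs c t) r ≠ 0 := gram_ne_zero (hU t ht) hr
  have hnorm : DifferentiableAt ℝ (fun s => (‖gramSchmidt ℝ (curveDerivs c s) r‖)⁻¹) t :=
    (DifferentiableAt.norm ℝ hd.differentiableAt hgr).inv (norm_ne_zero_iff.2 hgr)
  have h4 := (hnorm.hasDerivAt).smul hd
  refine ⟨(‖gramSchmidt ℝ (curveDerivs c t) r‖)⁻¹ • d +
      deriv (fun s => (‖gramSchmidt ℝ (curveDerivs c s) r‖)⁻¹) t • gramSchmidt ℝ (curveDerivs c t) r, ?_, ?_⟩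
  · exact h4.congr_of_eventuallyEq (Filter.Eventually.of_forall (fun s => frame_eq))
  · apply Submodule.add_mem
    · exact Submodule.smul_mem _ _ hdm
    · exact Submodule.smul_mem _ _ (Submodule.span_mono
        (Set.image_mono (Set.Iic_subset_Iic.2 (by omega)))
        (gramSchmidt_mem_span ℝ (curveDerivs c t) (le_refl r)))

lemma frenet_inner {t : ℝ}
    (hli : LinearIndependent ℝ (fun i : Fin n => iteratedDeriv ((i : ℕ) + 1) c t))
    {i j : ℕ} (hi : i < n) (hj : j < n) :
    ⟪frenetFrame c i t, frenetFrame c j t⟫ = if i = j then 1 else 0 := by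
  rcases eq_or_ne i j with rfl | hij
  · have h1 : ‖frenetFrame c i t‖ = 1 :=
      gramSchmidtNormed_unit_length' (f := curveDerivs c t) (frame_ne_zero hli hi)
    rw [if_pos rfl, real_inner_self_eq_norm_sq, h1]
    norm_num
  · rw [if_neg hij, frame_eq, frame_eq, real_inner_smul_left, real_inner_smul_right,
      gramSchmidt_orthogonal ℝ _ hij, mul_zero, mul_zero]

lemma inner_gram_frame_zero {t : ℝ} {l j : ℕ} (hlj : l ≠ j) :
    ⟪gramSchmidt ℝ (curveDerivs c t) l, frenetFrame c j t⟫ = 0 := by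
  rw [frame_eq, real_inner_smul_right, gramSchmidt_orthogonal ℝ _ hlj, mul_zero]

lemma inner_frame_zero_of_mem_span {t : ℝ} {m j : ℕ} (hmj : m < j)
    {d : EuclideanSpace ℝ (Fin n)}
    (hdm : d ∈ Submodule.span ℝ (curveDerivs c t '' Set.Iic m)) :
    ⟪d, frenetFrame c j t⟫ = 0 := by
  rw [← span_gramSchmidt_Iic ℝ (curveDerivs c t) m] at hdm
  refine inner_zero_of_mem_span hdm ?_
  rintro v ⟨l, hl, rfl⟩
  exact inner_gram_frame_zero (Nat.ne_of_lt (lt_of_le_of_lt hl hmj))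

lemma curveDerivs_span_top {t : ℝ} (hn : 1 ≤ n)
    (hli : LinearIndependent ℝ (fun i : Fin n => iteratedDeriv ((i : ℕ) + 1) c t)) :
    Submodule.span ℝ (curveDerivs c t '' Set.Iic (n - 1)) = ⊤ := by
  haveI : Nonempty (Fin n) := ⟨⟨0, by omega⟩⟩
  have himg : curveDerivs c t '' Set.Iic (n - 1) =
      Set.range (fun i : Fin n => iteratedDeriv ((i : ℕ) + 1) c t) := by
    ext x
    constructor
    · rintro ⟨l, hl, rfl⟩
      have hl' : l < n := by simp only [Set.mem_Iic] at hl; omega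
      exact ⟨⟨l, hl'⟩, rfl⟩
    · rintro ⟨i, rfl⟩
      exact ⟨(i : ℕ), Set.mem_Iic.2 (by omega), rfl⟩
  rw [himg]
  exact hli.span_eq_top_of_card_eq_finrank (by simp)

lemma frame_range_eq {t : ℝ} (hn : 1 ≤ n) :
    Set.range (fun k : Fin n => frenetFrame c (k : ℕ) t) =
      gramSchmidtNormed ℝ (curveDerivs c t) '' Set.Iic (n - 1) := by
  ext x
  constructor
  · rintro ⟨k, rfl⟩
    exact ⟨(k : ℕ), Set.mem_Iic.2 (by omega), rfl⟩
  · rintro ⟨l, hl, rfl⟩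
    have hl' : l < n := by simp only [Set.mem_Iic] at hl; omega
    exact ⟨⟨l, hl'⟩, rfl⟩

lemma frame_expansion {t : ℝ} (hn : 1 ≤ n)
    (hli : LinearIndependent ℝ (fun i : Fin n => iteratedDeriv ((i : ℕ) + 1) c t))
    (w : EuclideanSpace ℝ (Fin n)) :
    w = ∑ j : Fin n, ⟪frenetFrame c (j : ℕ) t, w⟫ • frenetFrame c (j : ℕ) t := by
  set ρ := w - ∑ j : Fin n, ⟪frenetFrame c (j : ℕ) t, w⟫ • frenetFrame c (j : ℕ) t with hρdef
  have hok : ∀ k : Fin n, ⟪frenetFrame c (k : ℕ) t, ρ⟫ = 0 := by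
    intro k
    rw [hρdef, inner_sub_right, inner_sum, sub_eq_zero]
    rw [Finset.sum_eq_single_of_mem k (Finset.mem_univ k)]
    · rw [real_inner_smul_right, frenet_inner hli k.isLt k.isLt, if_pos rfl, mul_one]
    · intro j _ hj
      rw [real_inner_smul_right, frenet_inner hli k.isLt j.isLt,
        if_neg (fun h => hj (Fin.ext h.symm)), mul_zero]
  have hspan : Submodule.span ℝ (Set.range (fun k : Fin n => frenetFrame c (k : ℕ) t)) = ⊤ := by
    rw [frame_range_eq hn]
    rw [show (gramSchmidtNormed ℝ (curveDerivs c t) '' Set.Iic (n-1) : Set (EuclideanSpace ℝ (Fin n)))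
      = gramSchmidtNormed ℝ (curveDerivs c t) '' Set.Iic (n-1) from rfl]
    rw [span_gramSchmidtNormed, span_gramSchmidt_Iic]
    exact curveDerivs_span_top hn hli
  have hρ0 : ρ = 0 := by
    have hm : ρ ∈ Submodule.span ℝ (Set.range fun k : Fin n => frenetFrame c (k : ℕ) t) := by
      rw [hspan]; trivial
    have h2 : ⟪ρ, ρ⟫ = 0 := inner_zero_of_mem_span hm (by rintro v ⟨k, rfl⟩; exact hok k)
    exact inner_self_eq_zero.1 h2
  exact sub_eq_zero.1 (hρdef.symm.trans hρ0)

lemma speed_ne_zero {t : ℝ} (hn : 1 ≤ n)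
    (hli : LinearIndependent ℝ (fun i : Fin n => iteratedDeriv ((i : ℕ) + 1) c t)) :
    ‖deriv c t‖ ≠ 0 := by
  have h0 := hli.ne_zero ⟨0, by omega⟩
  simp only [iteratedDeriv_one] at h0
  simpa using h0

lemma inner_deriv_frame_succ {t : ℝ} (hv : ‖deriv c t‖ ≠ 0) {i : ℕ}
    {d : EuclideanSpace ℝ (Fin n)} (hd : HasDerivAt (frenetFrame c i) d t) :
    ⟪d, frenetFrame c (i + 1) t⟫ = ‖deriv c t‖ * curvature c i t := by
  rw [curvature, hd.deriv]
  field_simp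

lemma frenet_skew {U : Set ℝ} (hUo : IsOpen U)
    (hU : ∀ t ∈ U, LinearIndependent ℝ (fun i : Fin n => iteratedDeriv ((i : ℕ) + 1) c t))
    {t : ℝ} (ht : t ∈ U) {i j : ℕ} (hi : i < n) (hj : j < n)
    {di dj : EuclideanSpace ℝ (Fin n)}
    (hdi : HasDerivAt (frenetFrame c i) di t) (hdj : HasDerivAt (frenetFrame c j) dj t) :
    ⟪frenetFrame c i t, dj⟫ + ⟪di, frenetFrame c j t⟫ = 0 := by
  have h1 := HasDerivAt.inner ℝ hdi hdj
  have h2 : (fun s => ⟪frenetFrame c i s, frenetFrame c j s⟫) =ᶠ[nhds t]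
      (fun _ => if i = j then (1 : ℝ) else 0) := by
    filter_upwards [hUo.mem_nhds ht] with s hs
    exact frenet_inner (hU s hs) hi hj
  have h3 : HasDerivAt (fun s => ⟪frenetFrame c i s, frenetFrame c j s⟫) 0 t :=
    (hasDerivAt_const t _).congr_of_eventuallyEq h2
  exact h1.unique h3

noncomputable def frenetMatrix {n : ℕ} (c : ℝ → EuclideanSpace ℝ (Fin n)) (t : ℝ)
    (i j : Fin n) : ℝ :=
  if (j : ℕ) = (i : ℕ) + 1 then ‖deriv c t‖ * curvature c (i : ℕ) t
  else if (i : ℕ) = (j : ℕ) + 1 then -(‖deriv c t‖ * curvature c (j : ℕ) t) else 0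

lemma frenet_deriv_eq (hc : ContDiff ℝ (⊤:ℕ∞) c) {U : Set ℝ} (hUo : IsOpen U)
    (hU : ∀ t ∈ U, LinearIndependent ℝ (fun i : Fin n => iteratedDeriv ((i : ℕ) + 1) c t))
    {t : ℝ} (ht : t ∈ U) (i : Fin n) :
    HasDerivAt (frenetFrame c (i : ℕ))
      (∑ j : Fin n, frenetMatrix c t i j • frenetFrame c (j : ℕ) t) t := by
  have hn1 : 1 ≤ n := le_trans (by omega) (Nat.succ_le_of_lt i.isLt)
  have hv : ‖deriv c t‖ ≠ 0 := speed_ne_zero hn1 (hU t ht)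
  obtain ⟨d, hd, hdm⟩ := frenet_hasDerivAt hc hU i.isLt ht
  have hval : ∀ j : Fin n, ⟪frenetFrame c (j : ℕ) t, d⟫ = frenetMatrix c t i j := by
    intro j
    by_cases h1 : (j : ℕ) = (i : ℕ) + 1
    · rw [frenetMatrix, if_pos h1, real_inner_comm, show ((j : ℕ)) = (i : ℕ) + 1 from h1]
      exact inner_deriv_frame_succ hv hd
    · by_cases h2 : (i : ℕ) = (j : ℕ) + 1
      · obtain ⟨d₂, hd₂, hdm₂⟩ := frenet_hasDerivAt hc hU j.isLt ht
        have hs := frenet_skew hUo hU ht j.isLt i.isLt hd₂ hd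
        have hc2 : ⟪d₂, frenetFrame c ((j : ℕ) + 1) t⟫ = ‖deriv c t‖ * curvature c (j : ℕ) t :=
          inner_deriv_frame_succ hv hd₂
        rw [frenetMatrix, if_neg h1, if_pos h2]
        have : ⟪d₂, frenetFrame c (i : ℕ) t⟫ = ‖deriv c t‖ * curvature c (j : ℕ) t := by
          rw [h2]; exact hc2
        linarith [hs, this]
      · rw [frenetMatrix, if_neg h1, if_neg h2]
        rcases Nat.lt_trichotomy (i : ℕ) (j : ℕ) with hlt | heq | hgt
        · -- i < j and j ≠ i+1, so i+1 < j
          rw [real_inner_comm]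
          exact inner_frame_zero_of_mem_span (by omega) hdm
        · -- i = j : skew with itself
          have hs := frenet_skew hUo hU ht i.isLt i.isLt hd hd
          rw [real_inner_comm] at hs
          have hj' : frenetFrame c (j : ℕ) t = frenetFrame c (i : ℕ) t := by rw [heq]
          rw [hj', real_inner_comm]
          linarith
        · -- j < i, i ≠ j+1, so j+1 < i
          obtain ⟨d₂, hd₂, hdm₂⟩ := frenet_hasDerivAt hc hU j.isLt ht
          have hs := frenet_skew hUo hU ht j.isLt i.isLt hd₂ hd
          have h0 : ⟪d₂, frenetFrame c (i : ℕ) t⟫ = 0 :=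
            inner_frame_zero_of_mem_span (by omega) hdm₂
          linarith
  have hde : d = ∑ j : Fin n, frenetMatrix c t i j • frenetFrame c (j : ℕ) t := by
    nth_rewrite 1 [frame_expansion hn1 (hU t ht) d]
    exact Finset.sum_congr rfl (fun j _ => by rw [hval j])
  exact hde ▸ hd

lemma gronwall_fwd {f df : ℝ → ℝ} {a b M : ℝ} (hab : a ≤ b) (hM : 0 ≤ M)
    (hf : ∀ s ∈ Set.Icc a b, HasDerivAt f (df s) s)
    (hle : ∀ s ∈ Set.Icc a b, df s ≤ M * f s)
    (hnon : ∀ s ∈ Set.Icc a b, 0 ≤ f s)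
    (ha : f a = 0) : f b = 0 := by
  have hg : ∀ s ∈ Set.Icc a b, HasDerivAt (fun s => f s * Real.exp (-M * s))
      ((df s - M * f s) * Real.exp (-M * s)) s := by
    intro s hs
    have he : HasDerivAt (fun y : ℝ => Real.exp (-M * y)) (Real.exp (-M * s) * -M) s :=
      by simpa using ((hasDerivAt_id s).const_mul (-M)).exp
    have h2 := (hf s hs).fun_mul he
    exact h2.congr_deriv (by ring)
  have anti : AntitoneOn (fun s => f s * Real.exp (-M * s)) (Set.Icc a b) := by
    apply antitoneOn_of_deriv_nonpos (convex_Icc a b)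
    · exact fun s hs => (hg s hs).continuousAt.continuousWithinAt
    · intro s hs
      rw [interior_Icc] at hs
      exact (hg s (Set.Ioo_subset_Icc_self hs)).differentiableAt.differentiableWithinAt
    · intro s hs
      rw [interior_Icc] at hs
      rw [(hg s (Set.Ioo_subset_Icc_self hs)).deriv]
      have h3 := hle s (Set.Ioo_subset_Icc_self hs)
      have h4 := Real.exp_pos (-M * s)
      nlinarith
  have hba := anti (Set.left_mem_Icc.2 hab) (Set.right_mem_Icc.2 hab) hab
  have h5 := Real.exp_pos (-M * b)
  have h6 := hnon b (Set.right_mem_Icc.2 hab)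
  simp only [ha, zero_mul] at hba
  nlinarith

lemma gronwall_bwd {f df : ℝ → ℝ} {a b M : ℝ} (hab : a ≤ b) (hM : 0 ≤ M)
    (hf : ∀ s ∈ Set.Icc a b, HasDerivAt f (df s) s)
    (hge : ∀ s ∈ Set.Icc a b, -(M * f s) ≤ df s)
    (hnon : ∀ s ∈ Set.Icc a b, 0 ≤ f s)
    (hb : f b = 0) : f a = 0 := by
  have hg : ∀ s ∈ Set.Icc a b, HasDerivAt (fun s => f s * Real.exp (M * s))
      ((df s + M * f s) * Real.exp (M * s)) s := by
    intro s hs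
    have he : HasDerivAt (fun y : ℝ => Real.exp (M * y)) (Real.exp (M * s) * M) s :=
      by simpa using ((hasDerivAt_id s).const_mul M).exp
    have h2 := (hf s hs).fun_mul he
    exact h2.congr_deriv (by ring)
  have mono : MonotoneOn (fun s => f s * Real.exp (M * s)) (Set.Icc a b) := by
    apply monotoneOn_of_deriv_nonneg (convex_Icc a b)
    · exact fun s hs => (hg s hs).continuousAt.continuousWithinAt
    · intro s hs
      rw [interior_Icc] at hs
      exact (hg s (Set.Ioo_subset_Icc_self hs)).differentiableAt.differentiableWithinAt
    · intro s hs
      rw [interior_Icc] at hs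
      rw [(hg s (Set.Ioo_subset_Icc_self hs)).deriv]
      have h3 := hge s (Set.Ioo_subset_Icc_self hs)
      have h4 := Real.exp_pos (M * s)
      nlinarith
  have hba := mono (Set.left_mem_Icc.2 hab) (Set.right_mem_Icc.2 hab) hab
  have h5 := Real.exp_pos (M * a)
  have h6 := hnon a (Set.left_mem_Icc.2 hab)
  simp only [hb, zero_mul] at hba
  nlinarith

lemma deriv_eq_speed_smul_frame {t : ℝ} (hn : 1 ≤ n)
    (hli : LinearIndependent ℝ (fun i : Fin n => iteratedDeriv ((i : ℕ) + 1) c t)) :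
    deriv c t = ‖deriv c t‖ • frenetFrame c 0 t := by
  have hv : ‖deriv c t‖ ≠ 0 := speed_ne_zero hn hli
  have hg0 : gramSchmidt ℝ (curveDerivs c t) 0 = curveDerivs c t 0 := by
    rw [gramSchmidt_def]
    rw [Nat.Iio_eq_range, Finset.range_zero, Finset.sum_empty, sub_zero]
  have hV0 : curveDerivs c t 0 = deriv c t := by
    show iteratedDeriv 1 c t = deriv c t
    rw [iteratedDeriv_one]
  rw [frame_eq, hg0, hV0, smul_smul, mul_inv_cancel₀ hv, one_smul]

lemma frenetMatrix_skew {t : ℝ} (i j : Fin n) :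
    frenetMatrix c t i j = -frenetMatrix c t j i := by
  rw [frenetMatrix, frenetMatrix]
  by_cases h1 : (j : ℕ) = (i : ℕ) + 1
  · rw [if_pos h1, if_neg (by omega), if_pos h1, neg_neg]
  · by_cases h2 : (i : ℕ) = (j : ℕ) + 1
    · rw [if_neg h1, if_pos h2, if_pos h2]
    · rw [if_neg h1, if_neg h2, if_neg h2, if_neg h1, neg_zero]

/-- **Uniqueness in the Frenet–Serret theory** (cf. Lemma 7.2 of the paper, euclidean
case).  Two smooth strongly regular curves in `ℝⁿ` (`n ≥ 2`), defined on a nontrivial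
interval `I` containing `0`, that start at the same point with the same Frenet–Serret
frame at `0`, and have equal speeds `‖c'‖ = ‖c̄'‖` and equal curvatures
`κ_i = κ̄_i` (`1 ≤ i ≤ n-1`) on `I`, coincide on `I`. -/
theorem curve_unique_of_curvatures
    (n : ℕ) (hn : 2 ≤ n) (I : Set ℝ) (hI : I.OrdConnected)
    (hInontriv : ∃ a ∈ I, ∃ b ∈ I, a < b) (h0 : (0 : ℝ) ∈ I)
    (c c' : ℝ → EuclideanSpace ℝ (Fin n))
    (hc : ContDiff ℝ (⊤ : ℕ∞) c) (hc' : ContDiff ℝ (⊤ : ℕ∞) c')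
    (hreg : ∀ t ∈ I, LinearIndependent ℝ (fun i : Fin n => iteratedDeriv (i + 1) c t))
    (hreg' : ∀ t ∈ I, LinearIndependent ℝ (fun i : Fin n => iteratedDeriv (i + 1) c' t))
    (hpt : c 0 = c' 0)
    (hframe : ∀ i < n, frenetFrame c i 0 = frenetFrame c' i 0)
    (hspeed : ∀ t ∈ I, ‖deriv c t‖ = ‖deriv c' t‖)
    (hcurv : ∀ t ∈ I, ∀ i < n - 1, curvature c i t = curvature c' i t) :
    ∀ t ∈ I, c t = c' t := by
  classical
  have hcs : ContDiff ℝ (⊤:ℕ∞) c := hc.of_le (by simp)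
  have hcs' : ContDiff ℝ (⊤:ℕ∞) c' := hc'.of_le (by simp)
  set U : Set ℝ := {t | LinearIndependent ℝ (fun i : Fin n => iteratedDeriv ((i:ℕ)+1) c t)} ∩
      {t | LinearIndependent ℝ (fun i : Fin n => iteratedDeriv ((i:ℕ)+1) c' t)} with hUdef
  have hUo : IsOpen U := by
    apply IsOpen.inter
    · exact isOpen_setOf_linearIndependent.preimage
        (continuous_pi (fun i : Fin n => (contDiff_itd hcs ((i:ℕ)+1)).continuous))
    · exact isOpen_setOf_linearIndependent.preimage
        (continuous_pi (fun i : Fin n => (contDiff_itd hcs' ((i:ℕ)+1)).continuous))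
  have hIU : I ⊆ U := fun t ht => ⟨hreg t ht, hreg' t ht⟩
  have hU1 : ∀ t ∈ U, LinearIndependent ℝ (fun i : Fin n => iteratedDeriv ((i:ℕ)+1) c t) :=
    fun t ht => ht.1
  have hU2 : ∀ t ∈ U, LinearIndependent ℝ (fun i : Fin n => iteratedDeriv ((i:ℕ)+1) c' t) :=
    fun t ht => ht.2
  have hmat : ∀ t ∈ I, frenetMatrix c t = frenetMatrix c' t := by
    intro t ht
    funext i j
    rw [frenetMatrix, frenetMatrix]
    have hsp := hspeed t ht
    by_cases h1 : (j : ℕ) = (i : ℕ) + 1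
    · have hj := j.isLt
      rw [if_pos h1, if_pos h1, hsp, hcurv t ht i (by omega)]
    · by_cases h2 : (i : ℕ) = (j : ℕ) + 1
      · have hi := i.isLt
        rw [if_neg h1, if_neg h1, if_pos h2, if_pos h2, hsp, hcurv t ht j (by omega)]
      · rw [if_neg h1, if_neg h1, if_neg h2, if_neg h2]
  have hn0 : 0 < n := by omega
  set i0 : Fin n := ⟨0, hn0⟩ with hi0def
  set w : ℝ → EuclideanSpace ℝ (Fin n) := fun s => c s - c' s with hwdef
  set u : Fin n → ℝ → EuclideanSpace ℝ (Fin n) :=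
    fun i s => frenetFrame c (i : ℕ) s - frenetFrame c' (i : ℕ) s with hudef
  set f : ℝ → ℝ := fun s => ⟪w s, w s⟫ + ∑ i : Fin n, ⟪u i s, u i s⟫ with hfdef
  set df : ℝ → ℝ := fun s => 2 * (‖deriv c s‖ * ⟪w s, u i0 s⟫) with hdfdef
  have hf0 : f 0 = 0 := by
    have hw0 : w 0 = 0 := sub_eq_zero.2 hpt
    have hu0 : ∀ i : Fin n, u i 0 = 0 := fun i => sub_eq_zero.2 (hframe (i : ℕ) i.isLt)
    simp [hfdef, hw0, hu0]
  have hfnon : ∀ s, 0 ≤ f s := fun s =>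
    add_nonneg real_inner_self_nonneg (Finset.sum_nonneg fun i _ => real_inner_self_nonneg)
  have hader : ∀ t ∈ I, HasDerivAt f (df t) t := by
    intro t ht
    have hli := hreg t ht
    have hli' := hreg' t ht
    have hsp := hspeed t ht
    have hwd : HasDerivAt w (‖deriv c t‖ • u i0 t) t := by
      have h1 : HasDerivAt c (deriv c t) t :=
        ((hcs.differentiable (by simp)).differentiableAt).hasDerivAt
      have h2 : HasDerivAt c' (deriv c' t) t :=
        ((hcs'.differentiable (by simp)).differentiableAt).hasDerivAt
      have h3 := h1.sub h2
      have he : deriv c t - deriv c' t = ‖deriv c t‖ • u i0 t := by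
        conv_lhs => rw [deriv_eq_speed_smul_frame hn0 hli, deriv_eq_speed_smul_frame hn0 hli']
        rw [← hsp, ← smul_sub]
      rw [he] at h3
      exact h3
    have hud : ∀ i : Fin n, HasDerivAt (u i)
        (∑ j : Fin n, frenetMatrix c t i j • u j t) t := by
      intro i
      have h1 := frenet_deriv_eq hcs hUo hU1 (hIU ht) i
      have h2 := frenet_deriv_eq hcs' hUo hU2 (hIU ht) i
      rw [← hmat t ht] at h2
      have h3 := h1.sub h2
      have he : (∑ j : Fin n, frenetMatrix c t i j • frenetFrame c (j : ℕ) t) -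
          (∑ j : Fin n, frenetMatrix c t i j • frenetFrame c' (j : ℕ) t) =
          ∑ j : Fin n, frenetMatrix c t i j • u j t := by
        rw [← Finset.sum_sub_distrib]
        exact Finset.sum_congr rfl fun j _ => (smul_sub _ _ _).symm
      rw [he] at h3
      exact h3
    have hwi : HasDerivAt (fun s => ⟪w s, w s⟫)
        (⟪w t, ‖deriv c t‖ • u i0 t⟫ + ⟪‖deriv c t‖ • u i0 t, w t⟫) t :=
      HasDerivAt.inner ℝ hwd hwd
    have hui : HasDerivAt (fun s => ∑ i : Fin n, ⟪u i s, u i s⟫)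
        (∑ i : Fin n, (⟪u i t, ∑ j : Fin n, frenetMatrix c t i j • u j t⟫ +
          ⟪∑ j : Fin n, frenetMatrix c t i j • u j t, u i t⟫)) t :=
      HasDerivAt.fun_sum (fun i _ => HasDerivAt.inner ℝ (hud i) (hud i))
    have hexp : ∀ i : Fin n, ⟪u i t, ∑ j : Fin n, frenetMatrix c t i j • u j t⟫ =
        ∑ j : Fin n, frenetMatrix c t i j * ⟪u i t, u j t⟫ := by
      intro i
      rw [inner_sum]
      exact Finset.sum_congr rfl fun j _ => real_inner_smul_right _ _ _
    have hSS : ∑ i : Fin n, ∑ j : Fin n, frenetMatrix c t i j * ⟪u i t, u j t⟫ = 0 := by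
      have h1 : ∑ i : Fin n, ∑ j : Fin n, frenetMatrix c t i j * ⟪u i t, u j t⟫ =
          ∑ i : Fin n, ∑ j : Fin n, -(frenetMatrix c t j i * ⟪u j t, u i t⟫) := by
        refine Finset.sum_congr rfl fun i _ => Finset.sum_congr rfl fun j _ => ?_
        rw [frenetMatrix_skew i j, real_inner_comm, neg_mul]
      have h2 : ∑ i : Fin n, ∑ j : Fin n, frenetMatrix c t j i * ⟪u j t, u i t⟫ =
          ∑ i : Fin n, ∑ j : Fin n, frenetMatrix c t i j * ⟪u i t, u j t⟫ :=
        Finset.sum_comm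
      simp only [Finset.sum_neg_distrib] at h1
      rw [h2] at h1
      linarith
    have hS : ∑ i : Fin n, (⟪u i t, ∑ j : Fin n, frenetMatrix c t i j • u j t⟫ +
        ⟪∑ j : Fin n, frenetMatrix c t i j • u j t, u i t⟫) = 0 := by
      have hterm : ∀ i : Fin n, ⟪u i t, ∑ j : Fin n, frenetMatrix c t i j • u j t⟫ +
          ⟪∑ j : Fin n, frenetMatrix c t i j • u j t, u i t⟫ =
          2 * ∑ j : Fin n, frenetMatrix c t i j * ⟪u i t, u j t⟫ := by
        intro i
        have hcomm : ⟪∑ j : Fin n, frenetMatrix c t i j • u j t, u i t⟫ =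
            ⟪u i t, ∑ j : Fin n, frenetMatrix c t i j • u j t⟫ := real_inner_comm _ _
        rw [hcomm, hexp i]
        ring
      rw [Finset.sum_congr rfl (fun i _ => hterm i), ← Finset.mul_sum, hSS, mul_zero]
    have htot := hwi.fun_add hui
    rw [hS, add_zero] at htot
    refine htot.congr_deriv ?_
    simp only [hdfdef]
    rw [real_inner_smul_right, real_inner_smul_left, real_inner_comm (u i0 t) (w t)]
    ring
  -- final Gronwall argument
  intro t ht
  have hvcont : Continuous (fun s => ‖deriv c s‖) :=
    ((contDiff_infty_iff_deriv.1 hcs).2.continuous).norm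
  have hkey : ∀ s : ℝ, 2 * ⟪w s, u i0 s⟫ ≤ f s ∧ -(2 * ⟪w s, u i0 s⟫) ≤ f s := by
    intro s
    have e1 : (0:ℝ) ≤ ⟪w s - u i0 s, w s - u i0 s⟫ := real_inner_self_nonneg
    have e2 : (0:ℝ) ≤ ⟪w s + u i0 s, w s + u i0 s⟫ := real_inner_self_nonneg
    rw [real_inner_sub_sub_self] at e1
    rw [real_inner_add_add_self] at e2
    have e3 : ⟪u i0 s, u i0 s⟫ ≤ ∑ i : Fin n, ⟪u i s, u i s⟫ :=
      Finset.single_le_sum (f := fun i : Fin n => ⟪u i s, u i s⟫)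
        (fun i _ => real_inner_self_nonneg) (Finset.mem_univ i0)
    constructor
    · simp only [hfdef]; linarith
    · simp only [hfdef]; linarith
  have hwzero : f t = 0 → c t = c' t := by
    intro hft
    have h1 : ⟪w t, w t⟫ ≤ f t := by
      have h2 : (0:ℝ) ≤ ∑ i : Fin n, ⟪u i t, u i t⟫ :=
        Finset.sum_nonneg fun i _ => real_inner_self_nonneg
      simp only [hfdef]; linarith
    have h3 : ⟪w t, w t⟫ = 0 := le_antisymm (hft ▸ h1) real_inner_self_nonneg
    exact sub_eq_zero.1 (inner_self_eq_zero.1 h3)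
  rcases le_total 0 t with hsign | hsign
  · have hIcc : Set.Icc (0:ℝ) t ⊆ I := hI.out h0 ht
    obtain ⟨C, hC⟩ := (isCompact_Icc (a := (0:ℝ)) (b := t)).exists_bound_of_continuousOn
      hvcont.continuousOn
    apply hwzero
    apply gronwall_fwd hsign (le_max_right C 0) (fun s hs => hader s (hIcc hs)) ?_
      (fun s _ => hfnon s) hf0
    intro s hs
    have hvs : (0:ℝ) ≤ ‖deriv c s‖ := norm_nonneg _
    have hvM : ‖deriv c s‖ ≤ max C 0 := by
      have := hC s hs
      rw [Real.norm_eq_abs] at this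
      exact le_trans (le_trans (le_abs_self _) this) (le_max_left C 0)
    have hk := (hkey s).1
    have e1 : (0:ℝ) ≤ ‖deriv c s‖ * (f s - 2 * ⟪w s, u i0 s⟫) :=
      mul_nonneg hvs (by linarith)
    have e2 : (0:ℝ) ≤ (max C 0 - ‖deriv c s‖) * f s := mul_nonneg (by linarith) (hfnon s)
    simp only [hdfdef]
    nlinarith
  · have hIcc : Set.Icc t (0:ℝ) ⊆ I := hI.out ht h0
    obtain ⟨C, hC⟩ := (isCompact_Icc (a := t) (b := (0:ℝ))).exists_bound_of_continuousOn
      hvcont.continuousOn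
    apply hwzero
    apply gronwall_bwd hsign (le_max_right C 0) (fun s hs => hader s (hIcc hs)) ?_
      (fun s _ => hfnon s) hf0
    intro s hs
    have hvs : (0:ℝ) ≤ ‖deriv c s‖ := norm_nonneg _
    have hvM : ‖deriv c s‖ ≤ max C 0 := by
      have := hC s hs
      rw [Real.norm_eq_abs] at this
      exact le_trans (le_trans (le_abs_self _) this) (le_max_left C 0)
    have hk := (hkey s).2
    have e1 : (0:ℝ) ≤ ‖deriv c s‖ * (f s + 2 * ⟪w s, u i0 s⟫) :=
      mul_nonneg hvs (by linarith)
    have e2 : (0:ℝ) ≤ (max C 0 - ‖deriv c s‖) * f s := mul_nonneg (by linarith) (hfnon s)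
    simp only [hdfdef]
    nlinarith
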